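/- arXiv:1603.00494 — 3 statements merged into one kernel-verified Lean document; each statement's English description precedes it below -/
import Mathlib

section
/- Let 𝔞ₙ be an increasing sequence of nonnegative, closed, densely defined symmetric forms on a Hilbert space H (i.e., D(𝔞ₙ₊₁) ⊆ D(𝔞ₙ) and 𝔞ₙ[u] ≤ 𝔞ₙ₊₁[u] for u ∈ D(𝔞ₙ₊₁)). Define 𝔞[u] := lim_{n→∞} 𝔞ₙ[u] on D(𝔞) := {u ∈ ⋂ₙ D(𝔞ₙ) : supₙ 𝔞ₙ[u] < ∞}. Then 𝔞 is a nonnegative closed symmetric form, and for every λ < 0 and u ∈ H, (λ − 𝔞ₙ)⁻¹u converges to (λ − 𝔞)⁻¹u, where the pseudoresolvents are defined via the associated self-adjoint operators on the closure of the form domains, extended by 0 on the orthogonal complement. -/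
/-!
For `lam < 0`, `w = (lam - b)⁻¹ u` minimises the energy `b[x] - lam ‖x‖² + 2 Re ⟪x, u⟫` over the
form domain; the minimum is `Re ⟪w, u⟫`, and a competitor `x` exceeds it by
`b[x - w] - lam ‖x - w‖²`. As the forms increase, so do the minima `Re ⟪wₙ, u⟫`; they are bounded
by the minimal limit energy and converge to some `S`. The excess of `wₘ` over `wₙ` for `aₙ`
(`n ≤ m`) is at most `S - Re ⟪wₙ, u⟫`, so `(wₙ)` is Cauchy for every `aₖ` and, by closedness,
converges to some `q` in the limit domain whose limit energy is at most `S`. Hence `S` is the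
minimal limit energy, and `-lam ‖w∞ - wₙ‖² ≤ S - Re ⟪wₙ, u⟫ → 0`.

Closedness of the limit form goes the same way: an `a`-Cauchy sequence is `aₙ`-Cauchy for every
`n`, with estimates uniform in `n`, so its `aₙ`-limits agree and are an `a`-limit.
-/

open Filter Topology ComplexConjugate

section HermitianForm

variable {H : Type*} [AddCommGroup H] [Module ℂ H]

structure IsHermitianForm (b : H → H → ℂ) : Prop where
  add_left : ∀ u v w, b (u + v) w = b u w + b v w
  smul_left : ∀ (c : ℂ) u v, b (c • u) v = c * b u v
  conj_symm : ∀ u v, b u v = conj (b v u)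

namespace IsHermitianForm

variable {b : H → H → ℂ} {D : Submodule ℂ H}

theorem sub_left (hb : IsHermitianForm b) (u v w : H) : b (u - v) w = b u w - b v w := by
  rw [sub_eq_add_neg, hb.add_left, ← neg_one_smul ℂ v, hb.smul_left]
  ring

theorem add_right (hb : IsHermitianForm b) (u v w : H) : b u (v + w) = b u v + b u w := by
  rw [hb.conj_symm, hb.add_left, map_add, ← hb.conj_symm, ← hb.conj_symm]

theorem sub_right (hb : IsHermitianForm b) (u v w : H) : b u (v - w) = b u v - b u w := by
  rw [hb.conj_symm, hb.sub_left, map_sub, ← hb.conj_symm, ← hb.conj_symm]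

theorem re_symm (hb : IsHermitianForm b) (u v : H) : (b u v).re = (b v u).re := by
  rw [hb.conj_symm, Complex.conj_re]

theorem re_add_self (hb : IsHermitianForm b) (x y : H) :
    (b (x + y) (x + y)).re = (b x x).re + 2 * (b x y).re + (b y y).re := by
  rw [hb.add_left, hb.add_right, hb.add_right]
  simp only [Complex.add_re]
  rw [hb.re_symm y x]
  ring

theorem re_sub_self (hb : IsHermitianForm b) (x y : H) :
    (b (x - y) (x - y)).re = (b x x).re - 2 * (b x y).re + (b y y).re := by
  rw [hb.sub_left, hb.sub_right, hb.sub_right]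
  simp only [Complex.sub_re]
  rw [hb.re_symm y x]
  ring

theorem apply_sub_self_comm (hb : IsHermitianForm b) (x y : H) :
    b (x - y) (x - y) = b (y - x) (y - x) := by
  simp only [hb.sub_left, hb.sub_right]
  ring

theorem re_apply_self_le_two_mul_add (hb : IsHermitianForm b)
    (hD : ∀ u ∈ D, 0 ≤ (b u u).re) {x y : H} (hx : x ∈ D) (hy : y ∈ D) :
    (b x x).re ≤ 2 * (b y y).re + 2 * (b (x - y) (x - y)).re := by
  have hsum := hb.re_add_self y (x - y)
  have hdiff := hb.re_sub_self y (x - y)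
  have hnn := hD _ (D.sub_mem hy (D.sub_mem hx hy))
  rw [add_sub_cancel] at hsum
  linarith

/-- The arguments are swapped: Mathlib's inner products are conjugate-linear in the first one. -/
abbrev toCore (hb : IsHermitianForm b) (hD : ∀ u ∈ D, 0 ≤ (b u u).re) :
    PreInnerProductSpace.Core ℂ D where
  inner x y := b y x
  conj_inner_symm x y := (hb.conj_symm _ _).symm
  re_inner_nonneg x := hD x x.2
  add_left x y z := hb.add_right _ _ _
  smul_left x y r := by
    simp only [Submodule.coe_smul]
    rw [hb.conj_symm, hb.smul_left, map_mul, ← hb.conj_symm]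

theorem abs_sqrt_re_sub_le (hb : IsHermitianForm b)
    (hD : ∀ u ∈ D, 0 ≤ (b u u).re) {x y : H} (hx : x ∈ D) (hy : y ∈ D) :
    |√(b x x).re - √(b y y).re| ≤ √(b (x - y) (x - y)).re :=
  @abs_norm_sub_norm_le D (@InnerProductSpace.Core.toSeminormedAddCommGroup ℂ D _ _ _
    (hb.toCore hD)) ⟨x, hx⟩ ⟨y, hy⟩

theorem tendsto_re_apply_self (hb : IsHermitianForm b)
    (hD : ∀ u ∈ D, 0 ≤ (b u u).re) {ι : Type*} {l : Filter ι} {y : ι → H} {z : H}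
    (hy : ∀ᶠ i in l, y i ∈ D) (hz : z ∈ D)
    (h : Tendsto (fun i => (b (y i - z) (y i - z)).re) l (𝓝 0)) :
    Tendsto (fun i => (b (y i) (y i)).re) l (𝓝 (b z z).re) := by
  have hsqrt : Tendsto (fun i => √(b (y i) (y i)).re) l (𝓝 √(b z z).re) := by
    rw [tendsto_iff_dist_tendsto_zero]
    refine squeeze_zero' (Eventually.of_forall fun i => dist_nonneg) ?_ (by simpa using h.sqrt)
    filter_upwards [hy] with i hyi
    exact hb.abs_sqrt_re_sub_le hD hyi hz
  rw [← Real.sq_sqrt (hD z hz)]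
  refine (hsqrt.pow 2).congr' ?_
  filter_upwards [hy] with i hyi
  exact Real.sq_sqrt (hD _ hyi)

theorem re_apply_sub_le_of_tendsto (hb : IsHermitianForm b)
    (hD : ∀ u ∈ D, 0 ≤ (b u u).re) {ι : Type*} {l : Filter ι} [l.NeBot] {x z : H} {y : ι → H}
    {c : ℝ} (hx : x ∈ D) (hy : ∀ᶠ i in l, y i ∈ D) (hz : z ∈ D)
    (h : Tendsto (fun i => (b (y i - z) (y i - z)).re) l (𝓝 0))
    (hc : ∀ᶠ i in l, (b (x - y i) (x - y i)).re ≤ c) : (b (x - z) (x - z)).re ≤ c := by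
  refine le_of_tendsto (hb.tendsto_re_apply_self hD (hy.mono fun i hi => D.sub_mem hx hi)
    (D.sub_mem hx hz) ?_) hc
  simpa only [sub_sub_sub_cancel_left, hb.apply_sub_self_comm z] using h

end IsHermitianForm

end HermitianForm

section FormNorm

variable {H : Type*} [NormedAddCommGroup H]

theorem tendsto_of_tendsto_norm_sub_sq {ι : Type*} {l : Filter ι} {f : ι → H} {x : H}
    (h : Tendsto (fun i => ‖f i - x‖ ^ 2) l (𝓝 0)) : Tendsto f l (𝓝 x) := by
  rw [tendsto_iff_norm_sub_tendsto_zero]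
  simpa using h.sqrt

def FormCauchy (b : H → H → ℂ) (f : ℕ → H) : Prop :=
  ∀ ε : ℝ, 0 < ε → ∃ N : ℕ, ∀ k m, N ≤ k → N ≤ m →
    (b (f k - f m) (f k - f m)).re + ‖f k - f m‖ ^ 2 < ε

def IsClosedForm (D : Set H) (b : H → H → ℂ) : Prop :=
  ∀ f : ℕ → H, (∀ m, f m ∈ D) → FormCauchy b f →
    ∃ u ∈ D, Tendsto (fun m => (b (f m - u) (f m - u)).re + ‖f m - u‖ ^ 2) atTop (𝓝 0)

namespace FormCauchy

variable {b b' : H → H → ℂ} {f : ℕ → H}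

theorem comp_add (hf : FormCauchy b f) (N : ℕ) : FormCauchy b fun m => f (m + N) := by
  intro ε hε
  obtain ⟨M, hM⟩ := hf ε hε
  exact ⟨M, fun k m hk hm => hM _ _ (le_add_right hk) (le_add_right hm)⟩

theorem mono (hf : FormCauchy b' f)
    (h : ∀ k m, (b (f k - f m) (f k - f m)).re ≤ (b' (f k - f m) (f k - f m)).re) :
    FormCauchy b f := by
  intro ε hε
  obtain ⟨N, hN⟩ := hf ε hε
  exact ⟨N, fun k m hk hm => (add_le_add_left (h k m) _).trans_lt (hN k m hk hm)⟩

end FormCauchy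

variable [Module ℂ H]

theorem IsHermitianForm.formCauchy_of_le {b : H → H → ℂ} (hb : IsHermitianForm b)
    {f : ℕ → H} {g : ℕ → ℝ} (hg : Tendsto g atTop (𝓝 0))
    (hfg : ∀ᶠ n in atTop, ∀ m, n ≤ m → (b (f m - f n) (f m - f n)).re + ‖f m - f n‖ ^ 2 ≤ g n) :
    FormCauchy b f := by
  intro ε hε
  obtain ⟨N, hN⟩ := eventually_atTop.1 (hfg.and (hg.eventually (gt_mem_nhds hε)))
  refine ⟨N, fun k m hk hm => ?_⟩
  rcases le_total m k with hmk | hkm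
  · exact ((hN m hm).1 k hmk).trans_lt (hN m hm).2
  · rw [hb.apply_sub_self_comm, norm_sub_rev]
    exact ((hN k hk).1 m hkm).trans_lt (hN k hk).2

theorem IsClosedForm.exists_tendsto {D : Submodule ℂ H} {b : H → H → ℂ}
    (hcl : IsClosedForm D b) (hD : ∀ u ∈ D, 0 ≤ (b u u).re) {f : ℕ → H}
    (hfD : ∀ᶠ m in atTop, f m ∈ D) (hf : FormCauchy b f) :
    ∃ q ∈ D, Tendsto f atTop (𝓝 q) ∧
      Tendsto (fun m => (b (f m - q) (f m - q)).re) atTop (𝓝 0) := by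
  obtain ⟨N, hN⟩ := eventually_atTop.1 hfD
  have hfND : ∀ m, f (m + N) ∈ D := fun m => hN _ (Nat.le_add_left N m)
  obtain ⟨q, hq, hlim⟩ := hcl _ hfND (hf.comp_add N)
  have hnn : ∀ m, 0 ≤ (b (f (m + N) - q) (f (m + N) - q)).re :=
    fun m => hD _ (D.sub_mem (hfND m) hq)
  refine ⟨q, hq, ?_, ?_⟩
  · refine tendsto_of_tendsto_norm_sub_sq ((tendsto_add_atTop_iff_nat N).1 ?_)
    exact squeeze_zero (fun m => sq_nonneg _) (fun m => le_add_of_nonneg_left (hnn m)) hlim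
  · refine (tendsto_add_atTop_iff_nat N).1 ?_
    exact squeeze_zero hnn (fun m => le_add_of_nonneg_right (sq_nonneg _)) hlim

theorem exists_tendsto_of_formCauchy {D : ℕ → Submodule ℂ H} {a : ℕ → H → H → ℂ}
    (hcl : ∀ n, IsClosedForm (D n) (a n)) (hD : ∀ n, ∀ u ∈ D n, 0 ≤ (a n u u).re)
    {f : ℕ → H} (hfD : ∀ n, ∀ᶠ m in atTop, f m ∈ D n) (hf : ∀ n, FormCauchy (a n) f) :
    ∃ q, (∀ n, q ∈ D n) ∧ Tendsto f atTop (𝓝 q) ∧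
      ∀ n, Tendsto (fun m => (a n (f m - q) (f m - q)).re) atTop (𝓝 0) := by
  choose q hqD hfq hq using fun n => (hcl n).exists_tendsto (hD n) (hfD n) (hf n)
  have hq0 : ∀ n, q n = q 0 := fun n => tendsto_nhds_unique (hfq n) (hfq 0)
  exact ⟨q 0, fun n => hq0 n ▸ hqD n, hfq 0, fun n => hq0 n ▸ hq n⟩

end FormNorm

section Energy

variable {H : Type*} [NormedAddCommGroup H] [InnerProductSpace ℂ H]

/-- The functional minimised over `D` by `(lam - b)⁻¹ u` when `lam < 0`. -/
noncomputable def formEnergy (b : H → H → ℂ) (lam : ℝ) (u x : H) : ℝ :=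
  (b x x).re - lam * ‖x‖ ^ 2 + 2 * (inner ℂ x u).re

/-- `w = (lam - b)⁻¹ u` for the form `b` with domain `D`, in variational form. -/
def IsFormResolvent (D : Set H) (b : H → H → ℂ) (lam : ℝ) (u w : H) : Prop :=
  w ∈ D ∧ ∀ v ∈ D, (lam : ℂ) * inner ℂ v w - b w v = inner ℂ v u

theorem formEnergy_le_formEnergy {b b' : H → H → ℂ} {lam : ℝ} {u x : H}
    (h : (b x x).re ≤ (b' x x).re) : formEnergy b lam u x ≤ formEnergy b' lam u x := by
  unfold formEnergy
  linarith

/-- The last term is the residual of the equation `IsFormResolvent` for `w`, tested against `d`. -/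
theorem IsHermitianForm.formEnergy_add {b : H → H → ℂ} (hb : IsHermitianForm b) (lam : ℝ)
    (u w d : H) :
    formEnergy b lam u (w + d) = formEnergy b lam u w + ((b d d).re - lam * ‖d‖ ^ 2)
      - 2 * ((lam : ℂ) * inner ℂ d w - b w d - inner ℂ d u).re := by
  have hnorm : ‖w + d‖ ^ 2 = ‖w‖ ^ 2 + 2 * (inner ℂ d w).re + ‖d‖ ^ 2 := by
    rw [norm_add_sq (𝕜 := ℂ), inner_re_symm]
    rfl
  simp only [formEnergy, hb.re_add_self, hnorm, inner_add_left, Complex.add_re, Complex.sub_re,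
    Complex.re_ofReal_mul]
  ring

theorem IsHermitianForm.tendsto_formEnergy {D : Submodule ℂ H} {b : H → H → ℂ}
    (hb : IsHermitianForm b) (hD : ∀ u ∈ D, 0 ≤ (b u u).re) (lam : ℝ) (u : H) {ι : Type*}
    {l : Filter ι} {y : ι → H} {z : H} (hy : ∀ᶠ i in l, y i ∈ D) (hz : z ∈ D)
    (hyz : Tendsto (fun i => (b (y i - z) (y i - z)).re) l (𝓝 0)) (hyz' : Tendsto y l (𝓝 z)) :
    Tendsto (fun i => formEnergy b lam u (y i)) l (𝓝 (formEnergy b lam u z)) := by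
  have hinner : Tendsto (fun i => (inner ℂ (y i) u).re) l (𝓝 (inner ℂ z u).re) :=
    (Complex.continuous_re.tendsto _).comp (hyz'.inner tendsto_const_nhds)
  exact ((hb.tendsto_re_apply_self hD hy hz hyz).sub ((hyz'.norm.pow 2).const_mul lam)).add
    (hinner.const_mul 2)

namespace IsFormResolvent

variable {D : Set H} {b : H → H → ℂ} {lam : ℝ} {u w : H}

theorem formEnergy_eq (hw : IsFormResolvent D b lam u w) :
    formEnergy b lam u w = (inner ℂ w u).re := by
  have h := congrArg Complex.re (hw.2 w hw.1)
  have hnorm : (inner ℂ w w).re = ‖w‖ ^ 2 := inner_self_eq_norm_sq (𝕜 := ℂ) w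
  simp only [Complex.sub_re, Complex.re_ofReal_mul, hnorm] at h
  unfold formEnergy
  linarith

theorem re_inner_add_eq_formEnergy (hb : IsHermitianForm b) (hw : IsFormResolvent D b lam u w)
    {x : H} (hx : x - w ∈ D) :
    (inner ℂ w u).re + ((b (x - w) (x - w)).re - lam * ‖x - w‖ ^ 2) = formEnergy b lam u x := by
  have h := hb.formEnergy_add lam u w (x - w)
  rw [add_sub_cancel, hw.2 _ hx, sub_self, Complex.zero_re, hw.formEnergy_eq] at h
  linarith

end IsFormResolvent

end Energy

section IncreasingForms

variable {H : Type*} [NormedAddCommGroup H] [InnerProductSpace ℂ H]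

structure IsIncreasingFormSeq (D : ℕ → Submodule ℂ H) (a : ℕ → H → H → ℂ) : Prop where
  isHermitianForm : ∀ n, IsHermitianForm (a n)
  nonneg : ∀ n, ∀ u ∈ D n, 0 ≤ (a n u u).re
  domain_succ_le : ∀ n, D (n + 1) ≤ D n
  re_apply_self_le_succ : ∀ n, ∀ u ∈ D (n + 1), (a n u u).re ≤ (a (n + 1) u u).re

def limitFormDomain (D : ℕ → Submodule ℂ H) (a : ℕ → H → H → ℂ) : Set H :=
  {u | (∀ n, u ∈ D n) ∧ BddAbove (Set.range fun n => (a n u u).re)}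

namespace IsIncreasingFormSeq

variable {D : ℕ → Submodule ℂ H} {a : ℕ → H → H → ℂ} {lam : ℝ} {u : H}

theorem mem_of_le (hs : IsIncreasingFormSeq D a) {n m : ℕ} (hnm : n ≤ m) {x : H}
    (hx : x ∈ D m) : x ∈ D n :=
  antitone_nat_of_succ_le hs.domain_succ_le hnm hx

theorem re_apply_self_mono (hs : IsIncreasingFormSeq D a) {n m : ℕ} (hnm : n ≤ m) {x : H}
    (hx : x ∈ D m) : (a n x x).re ≤ (a m x x).re := by
  induction m, hnm using Nat.le_induction with
  | base => exact le_rfl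
  | succ m hnm ih =>
    exact (ih (hs.domain_succ_le m hx)).trans (hs.re_apply_self_le_succ m x hx)

theorem sub_mem_limitFormDomain (hs : IsIncreasingFormSeq D a) {x y : H}
    (hx : x ∈ limitFormDomain D a) (hy : y ∈ limitFormDomain D a) :
    x - y ∈ limitFormDomain D a := by
  obtain ⟨hxD, Cx, hCx⟩ := hx
  obtain ⟨hyD, Cy, hCy⟩ := hy
  refine ⟨fun n => (D n).sub_mem (hxD n) (hyD n), 2 * Cx + 2 * Cy, ?_⟩
  rintro _ ⟨n, rfl⟩
  have h := (hs.isHermitianForm n).re_apply_self_le_two_mul_add (hs.nonneg n)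
    ((D n).sub_mem (hxD n) (hyD n)) (hxD n)
  rw [(hs.isHermitianForm n).apply_sub_self_comm (x - y) x, sub_sub_cancel] at h
  linarith [hCx ⟨n, rfl⟩, hCy ⟨n, rfl⟩]

theorem formEnergy_mono (hs : IsIncreasingFormSeq D a) {n m : ℕ} (hnm : n ≤ m) {x : H}
    (hx : x ∈ D m) : formEnergy (a n) lam u x ≤ formEnergy (a m) lam u x :=
  formEnergy_le_formEnergy (hs.re_apply_self_mono hnm hx)

theorem re_inner_add_le_of_isFormResolvent (hs : IsIncreasingFormSeq D a) {w : ℕ → H}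
    (hw : ∀ n, IsFormResolvent (D n) (a n) lam u (w n)) {n m : ℕ} (hnm : n ≤ m) :
    (inner ℂ (w n) u).re + ((a n (w m - w n) (w m - w n)).re - lam * ‖w m - w n‖ ^ 2)
      ≤ (inner ℂ (w m) u).re := calc
  _ = formEnergy (a n) lam u (w m) := (hw n).re_inner_add_eq_formEnergy (hs.isHermitianForm n)
      ((D n).sub_mem (hs.mem_of_le hnm (hw m).1) (hw n).1)
  _ ≤ formEnergy (a m) lam u (w m) := hs.formEnergy_mono hnm (hw m).1
  _ = (inner ℂ (w m) u).re := (hw m).formEnergy_eq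

theorem monotone_re_inner_of_isFormResolvent (hs : IsIncreasingFormSeq D a) (hlam : lam ≤ 0)
    {w : ℕ → H} (hw : ∀ n, IsFormResolvent (D n) (a n) lam u (w n)) :
    Monotone fun n => (inner ℂ (w n) u).re := by
  intro n m hnm
  have h := hs.re_inner_add_le_of_isFormResolvent hw hnm
  have hnn := hs.nonneg n _ ((D n).sub_mem (hs.mem_of_le hnm (hw m).1) (hw n).1)
  nlinarith [sq_nonneg ‖w m - w n‖]

theorem formCauchy_of_isFormResolvent (hs : IsIncreasingFormSeq D a) (hlam : lam < 0)
    {w : ℕ → H} (hw : ∀ n, IsFormResolvent (D n) (a n) lam u (w n)) {S : ℝ}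
    (hS : Tendsto (fun n => (inner ℂ (w n) u).re) atTop (𝓝 S)) (k : ℕ) :
    FormCauchy (a k) w := by
  have hES : ∀ n, (inner ℂ (w n) u).re ≤ S :=
    (hs.monotone_re_inner_of_isFormResolvent hlam.le hw).ge_of_tendsto hS
  have hgap : Tendsto (fun n => S - (inner ℂ (w n) u).re) atTop (𝓝 0) := by
    simpa using (tendsto_const_nhds (x := S)).sub hS
  refine (hs.isHermitianForm k).formCauchy_of_le (by simpa using hgap.add (hgap.div_const (-lam)))
    ?_
  filter_upwards [eventually_ge_atTop k] with n hkn m hnm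
  have hd := (D n).sub_mem (hs.mem_of_le hnm (hw m).1) (hw n).1
  have hinc := hs.re_inner_add_le_of_isFormResolvent hw hnm
  have hkn := hs.re_apply_self_mono hkn hd
  have hnn := hs.nonneg n _ hd
  have hnorm : ‖w m - w n‖ ^ 2 ≤ (S - (inner ℂ (w n) u).re) / -lam := by
    rw [le_div_iff₀ (neg_pos.2 hlam)]
    linarith [hES m]
  nlinarith [hES m, mul_nonneg (neg_nonneg.2 hlam.le) (sq_nonneg ‖w m - w n‖)]

end IsIncreasingFormSeq

theorem mem_limitFormDomain_of_formEnergy_le {D : ℕ → Submodule ℂ H} {a : ℕ → H → H → ℂ}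
    {lam : ℝ} {u : H} (hlam : lam ≤ 0) {x : H} (hx : ∀ n, x ∈ D n) {S : ℝ}
    (hS : ∀ n, formEnergy (a n) lam u x ≤ S) : x ∈ limitFormDomain D a := by
  refine ⟨hx, S - 2 * (inner ℂ x u).re, ?_⟩
  rintro _ ⟨n, rfl⟩
  have h := hS n
  unfold formEnergy at h
  nlinarith [sq_nonneg ‖x‖]

def IsLimitForm (D : ℕ → Submodule ℂ H) (a : ℕ → H → H → ℂ) (ainf : H → H → ℂ) : Prop :=
  ∀ x ∈ limitFormDomain D a, ∀ y ∈ limitFormDomain D a,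
    Tendsto (fun n => a n x y) atTop (𝓝 (ainf x y))

namespace IsLimitForm

variable {D : ℕ → Submodule ℂ H} {a : ℕ → H → H → ℂ} {ainf : H → H → ℂ} {lam : ℝ} {u x : H}

theorem tendsto_re (hlim : IsLimitForm D a ainf) (hx : x ∈ limitFormDomain D a) :
    Tendsto (fun n => (a n x x).re) atTop (𝓝 (ainf x x).re) :=
  (Complex.continuous_re.tendsto _).comp (hlim x hx x hx)

theorem tendsto_formEnergy (hlim : IsLimitForm D a ainf) (hx : x ∈ limitFormDomain D a) :
    Tendsto (fun n => formEnergy (a n) lam u x) atTop (𝓝 (formEnergy ainf lam u x)) :=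
  ((hlim.tendsto_re hx).sub_const _).add_const _

theorem re_apply_self_le (hlim : IsLimitForm D a ainf) (hs : IsIncreasingFormSeq D a)
    (hx : x ∈ limitFormDomain D a) (n : ℕ) : (a n x x).re ≤ (ainf x x).re :=
  Monotone.ge_of_tendsto (fun _ m hnm => hs.re_apply_self_mono hnm (hx.1 m)) (hlim.tendsto_re hx) n

theorem conj_symm (hlim : IsLimitForm D a ainf) (hs : IsIncreasingFormSeq D a) {y : H}
    (hx : x ∈ limitFormDomain D a) (hy : y ∈ limitFormDomain D a) :
    ainf x y = conj (ainf y x) := by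
  refine tendsto_nhds_unique (hlim x hx y hy) ?_
  simp_rw [fun n => (hs.isHermitianForm n).conj_symm x y]
  exact (Complex.continuous_conj.tendsto _).comp (hlim y hy x hx)

theorem re_nonneg (hlim : IsLimitForm D a ainf) (hs : IsIncreasingFormSeq D a)
    (hx : x ∈ limitFormDomain D a) : 0 ≤ (ainf x x).re :=
  ge_of_tendsto' (hlim.tendsto_re hx) fun n => hs.nonneg n x (hx.1 n)

theorem isClosedForm (hlim : IsLimitForm D a ainf) (hs : IsIncreasingFormSeq D a)
    (hcl : ∀ n, IsClosedForm (D n) (a n)) : IsClosedForm (limitFormDomain D a) ainf := by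
  intro f hf hcau
  have hfsub : ∀ i j, f i - f j ∈ limitFormDomain D a :=
    fun i j => hs.sub_mem_limitFormDomain (hf i) (hf j)
  obtain ⟨q, hqD, hfq, hq⟩ := exists_tendsto_of_formCauchy hcl hs.nonneg
    (fun n => Eventually.of_forall fun m => (hf m).1 n)
    (fun n => hcau.mono fun i j => hlim.re_apply_self_le hs (hfsub i j) n)
  have hunif : ∀ ε > 0, ∃ N, ∀ m ≥ N, ∀ n, (a n (f m - q) (f m - q)).re ≤ ε := by
    intro ε hε
    obtain ⟨N, hN⟩ := hcau ε hε
    refine ⟨N, fun m hm n => (hs.isHermitianForm n).re_apply_sub_le_of_tendsto (hs.nonneg n)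
      ((hf m).1 n) (Eventually.of_forall fun j => (hf j).1 n) (hqD n) (hq n) ?_⟩
    filter_upwards [eventually_ge_atTop N] with j hj
    exact (hlim.re_apply_self_le hs (hfsub m j) n).trans
      (le_add_of_nonneg_right (sq_nonneg _) |>.trans (hN m j hm hj).le)
  have hqlim : q ∈ limitFormDomain D a := by
    obtain ⟨N, hN⟩ := hunif 1 one_pos
    refine ⟨hqD, 2 * (ainf (f N) (f N)).re + 2, ?_⟩
    rintro _ ⟨n, rfl⟩
    have h := (hs.isHermitianForm n).re_apply_self_le_two_mul_add (hs.nonneg n) (hqD n) ((hf N).1 n)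
    rw [(hs.isHermitianForm n).apply_sub_self_comm] at h
    linarith [hN N le_rfl n, hlim.re_apply_self_le hs (hf N) n]
  have hfqlim : ∀ m, f m - q ∈ limitFormDomain D a :=
    fun m => hs.sub_mem_limitFormDomain (hf m) hqlim
  have hainf : Tendsto (fun m => (ainf (f m - q) (f m - q)).re) atTop (𝓝 0) := by
    refine tendsto_order.2 ⟨fun c hc => Eventually.of_forall fun m =>
      hc.trans_le (hlim.re_nonneg hs (hfqlim m)), fun c hc => ?_⟩
    obtain ⟨N, hN⟩ := hunif (c / 2) (half_pos hc)
    filter_upwards [eventually_ge_atTop N] with m hm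
    exact (le_of_tendsto' (hlim.tendsto_re (hfqlim m)) (hN m hm)).trans_lt (half_lt_self hc)
  exact ⟨q, hqlim, by simpa using hainf.add ((tendsto_iff_norm_sub_tendsto_zero.1 hfq).pow 2)⟩

theorem formEnergy_le_of_isFormResolvent (hlim : IsLimitForm D a ainf)
    (hs : IsIncreasingFormSeq D a) (hlam : lam ≤ 0) {w x : H}
    (hw : IsFormResolvent (limitFormDomain D a) ainf lam u w) (hx : x ∈ limitFormDomain D a) :
    formEnergy ainf lam u w ≤ formEnergy ainf lam u x := by
  have hd : x - w ∈ limitFormDomain D a := hs.sub_mem_limitFormDomain hx hw.1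
  -- the residual of the equation of `w`, tested against `x - w`, vanishes in the limit
  have hres : Tendsto (fun n => ((lam : ℂ) * inner ℂ (x - w) w - a n w (x - w)
      - inner ℂ (x - w) u).re) atTop (𝓝 0) := by
    have h := ((tendsto_const_nhds (x := (lam : ℂ) * inner ℂ (x - w) w)).sub
      (hlim w hw.1 _ hd)).sub (tendsto_const_nhds (x := inner ℂ (x - w) u))
    rw [hw.2 _ hd, sub_self] at h
    exact (Complex.continuous_re.tendsto 0).comp h
  have hlower := (hlim.tendsto_formEnergy (lam := lam) (u := u) hw.1).sub (hres.const_mul 2)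
  rw [mul_zero, sub_zero] at hlower
  refine le_of_tendsto_of_tendsto hlower (hlim.tendsto_formEnergy hx)
    (Eventually.of_forall fun n => ?_)
  have h := (hs.isHermitianForm n).formEnergy_add lam u w (x - w)
  rw [add_sub_cancel] at h
  dsimp only
  nlinarith [hs.nonneg n _ (hd.1 n), mul_nonneg (neg_nonneg.2 hlam) (sq_nonneg ‖x - w‖)]

theorem exists_formEnergy_le_of_isFormResolvent (hlim : IsLimitForm D a ainf)
    (hs : IsIncreasingFormSeq D a) (hcl : ∀ n, IsClosedForm (D n) (a n)) (hlam : lam < 0)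
    {w : ℕ → H} (hw : ∀ n, IsFormResolvent (D n) (a n) lam u (w n)) {S : ℝ}
    (hS : Tendsto (fun n => (inner ℂ (w n) u).re) atTop (𝓝 S)) :
    ∃ q ∈ limitFormDomain D a, formEnergy ainf lam u q ≤ S := by
  have hES : ∀ n, (inner ℂ (w n) u).re ≤ S :=
    (hs.monotone_re_inner_of_isFormResolvent hlam.le hw).ge_of_tendsto hS
  have hwD : ∀ k, ∀ᶠ m in atTop, w m ∈ D k := fun k =>
    (eventually_ge_atTop k).mono fun m hm => hs.mem_of_le hm (hw m).1
  obtain ⟨q, hqD, hwq, hq⟩ := exists_tendsto_of_formCauchy hcl hs.nonneg hwD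
    (hs.formCauchy_of_isFormResolvent hlam hw hS)
  have hQ : ∀ k, formEnergy (a k) lam u q ≤ S := fun k => by
    refine le_of_tendsto ((hs.isHermitianForm k).tendsto_formEnergy (hs.nonneg k) lam u (hwD k)
      (hqD k) (hq k) hwq) ?_
    filter_upwards [eventually_ge_atTop k] with m hm
    calc formEnergy (a k) lam u (w m) ≤ formEnergy (a m) lam u (w m) :=
          hs.formEnergy_mono hm (hw m).1
      _ = (inner ℂ (w m) u).re := (hw m).formEnergy_eq
      _ ≤ S := hES m
  have hqlim := mem_limitFormDomain_of_formEnergy_le hlam.le hqD hQ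
  exact ⟨q, hqlim, le_of_tendsto' (hlim.tendsto_formEnergy hqlim) hQ⟩

theorem tendsto_of_isFormResolvent (hlim : IsLimitForm D a ainf) (hs : IsIncreasingFormSeq D a)
    (hcl : ∀ n, IsClosedForm (D n) (a n)) (hlam : lam < 0) {w : ℕ → H} {winf : H}
    (hw : ∀ n, IsFormResolvent (D n) (a n) lam u (w n))
    (hwinf : IsFormResolvent (limitFormDomain D a) ainf lam u winf) :
    Tendsto w atTop (𝓝 winf) := by
  have hgap : ∀ n, (inner ℂ (w n) u).re
      + ((a n (winf - w n) (winf - w n)).re - lam * ‖winf - w n‖ ^ 2)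
      ≤ (inner ℂ winf u).re := fun n => calc
    _ = formEnergy (a n) lam u winf := (hw n).re_inner_add_eq_formEnergy (hs.isHermitianForm n)
        ((D n).sub_mem (hwinf.1.1 n) (hw n).1)
    _ ≤ formEnergy ainf lam u winf :=
        formEnergy_le_formEnergy (hlim.re_apply_self_le hs hwinf.1 n)
    _ = (inner ℂ winf u).re := hwinf.formEnergy_eq
  have hsq : ∀ n, 0 ≤ -lam * ‖winf - w n‖ ^ 2 :=
    fun n => mul_nonneg (neg_nonneg.2 hlam.le) (sq_nonneg _)
  have hnn : ∀ n, 0 ≤ (a n (winf - w n) (winf - w n)).re :=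
    fun n => hs.nonneg n _ ((D n).sub_mem (hwinf.1.1 n) (hw n).1)
  obtain ⟨S, hS⟩ : ∃ S, Tendsto (fun n => (inner ℂ (w n) u).re) atTop (𝓝 S) :=
    ⟨_, tendsto_atTop_ciSup (hs.monotone_re_inner_of_isFormResolvent hlam.le hw)
      ⟨(inner ℂ winf u).re, Set.forall_mem_range.2 fun n => by linarith [hgap n, hsq n, hnn n]⟩⟩
  -- `winf` minimises the limit energy, whose value at the limit point of `w` is at most `S`
  have hwinfS : (inner ℂ winf u).re ≤ S := by
    obtain ⟨q, hq, hqS⟩ := hlim.exists_formEnergy_le_of_isFormResolvent hs hcl hlam hw hS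
    rw [← hwinf.formEnergy_eq]
    exact (hlim.formEnergy_le_of_isFormResolvent hs hlam.le hwinf hq).trans hqS
  have hlim0 : Tendsto (fun n => (S - (inner ℂ (w n) u).re) / -lam) atTop (𝓝 0) := by
    simpa using ((tendsto_const_nhds (x := S)).sub hS).div_const (-lam)
  refine tendsto_of_tendsto_norm_sub_sq (squeeze_zero (fun n => sq_nonneg _) (fun n => ?_) hlim0)
  rw [norm_sub_rev, le_div_iff₀ (neg_pos.2 hlam)]
  linarith [hgap n, hnn n]

end IsLimitForm

end IncreasingForms

theorem simon_monotone_convergence_of_forms_general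
    {H : Type*} [NormedAddCommGroup H] [InnerProductSpace ℂ H]
    (D : ℕ → Submodule ℂ H) (a : ℕ → H → H → ℂ)
    (hadd₁ : ∀ n u v w, a n (u + v) w = a n u w + a n v w)
    (hsmul₁ : ∀ n (c : ℂ) u v, a n (c • u) v = c * a n u v)
    (hsymm : ∀ n u v, a n u v = (starRingEnd ℂ) (a n v u))
    (hnonneg : ∀ n, ∀ u ∈ D n, 0 ≤ (a n u u).re)
    (hclosed : ∀ n, ∀ f : ℕ → H, (∀ m, f m ∈ D n) →
      (∀ ε : ℝ, 0 < ε → ∃ N : ℕ, ∀ k m, N ≤ k → N ≤ m →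
        (a n (f k - f m) (f k - f m)).re + ‖f k - f m‖ ^ 2 < ε) →
      ∃ u ∈ D n, Tendsto (fun m => (a n (f m - u) (f m - u)).re + ‖f m - u‖ ^ 2)
        atTop (nhds 0))
    (hmonoD : ∀ n, D (n + 1) ≤ D n)
    (hmono : ∀ n, ∀ u ∈ D (n + 1), (a n u u).re ≤ (a (n + 1) u u).re)
    (Dinf : Set H)
    (hDinf : Dinf = {u : H | (∀ n, u ∈ D n) ∧
      BddAbove (Set.range fun n => (a n u u).re)})
    (ainf : H → H → ℂ)
    (hainf : ∀ u ∈ Dinf, ∀ v ∈ Dinf,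
      Tendsto (fun n => a n u v) atTop (nhds (ainf u v))) :
    -- the limit form is symmetric and nonnegative
    (∀ u ∈ Dinf, ∀ v ∈ Dinf, ainf u v = (starRingEnd ℂ) (ainf v u)) ∧
    (∀ u ∈ Dinf, 0 ≤ (ainf u u).re) ∧
    -- the limit form is closed
    (∀ f : ℕ → H, (∀ m, f m ∈ Dinf) →
      (∀ ε : ℝ, 0 < ε → ∃ N : ℕ, ∀ k m, N ≤ k → N ≤ m →
        (ainf (f k - f m) (f k - f m)).re + ‖f k - f m‖ ^ 2 < ε) →
      ∃ u ∈ Dinf, Tendsto (fun m => (ainf (f m - u) (f m - u)).re + ‖f m - u‖ ^ 2)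
        atTop (nhds 0)) ∧
    -- strong convergence of the pseudoresolvents for λ < 0
    (∀ lam : ℝ, lam < 0 → ∀ u : H, ∀ w : ℕ → H, ∀ winf : H,
      (∀ n, w n ∈ D n ∧ ∀ v ∈ D n,
        (lam : ℂ) * (inner ℂ v (w n) : ℂ) - a n (w n) v = (inner ℂ v u : ℂ)) →
      (winf ∈ Dinf ∧ ∀ v ∈ Dinf,
        (lam : ℂ) * (inner ℂ v winf : ℂ) - ainf winf v = (inner ℂ v u : ℂ)) →
      Tendsto w atTop (nhds winf)) := by
  subst hDinf
  have hs : IsIncreasingFormSeq D a :=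
    ⟨fun n => ⟨hadd₁ n, hsmul₁ n, hsymm n⟩, hnonneg, hmonoD, hmono⟩
  have hlim : IsLimitForm D a ainf := hainf
  exact ⟨fun u hu v hv => hlim.conj_symm hs hu hv, fun u hu => hlim.re_nonneg hs hu,
    hlim.isClosedForm hs hclosed,
    fun lam hlam u w winf hw hwinf => hlim.tendsto_of_isFormResolvent hs hclosed hlam hw hwinf⟩

/-- Simon's monotone convergence theorem for an increasing sequence of nonnegative, closed,
densely defined symmetric forms `aₙ`: the limit form `a` on
`D(a) = {u ∈ ⋂ D(aₙ) : sup aₙ[u] < ∞}` is a nonnegative closed symmetric form, and for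
`λ < 0` the pseudoresolvents `(λ − aₙ)⁻¹ u` (characterized variationally, which incorporates
the projection onto the closure of the form domain) converge to `(λ − a)⁻¹ u`. -/
theorem simon_monotone_convergence_of_forms
    {H : Type*} [NormedAddCommGroup H] [InnerProductSpace ℂ H] [CompleteSpace H]
    (D : ℕ → Submodule ℂ H) (a : ℕ → H → H → ℂ)
    (hadd₁ : ∀ n u v w, a n (u + v) w = a n u w + a n v w)
    (hsmul₁ : ∀ n (c : ℂ) u v, a n (c • u) v = c * a n u v)
    (hsymm : ∀ n u v, a n u v = (starRingEnd ℂ) (a n v u))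
    (hnonneg : ∀ n, ∀ u ∈ D n, 0 ≤ (a n u u).re)
    (hdense : ∀ n, Dense ((D n : Set H)))
    (hclosed : ∀ n, ∀ f : ℕ → H, (∀ m, f m ∈ D n) →
      (∀ ε : ℝ, 0 < ε → ∃ N : ℕ, ∀ k m, N ≤ k → N ≤ m →
        (a n (f k - f m) (f k - f m)).re + ‖f k - f m‖ ^ 2 < ε) →
      ∃ u ∈ D n, Tendsto (fun m => (a n (f m - u) (f m - u)).re + ‖f m - u‖ ^ 2)
        atTop (nhds 0))
    (hmonoD : ∀ n, D (n + 1) ≤ D n)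
    (hmono : ∀ n, ∀ u ∈ D (n + 1), (a n u u).re ≤ (a (n + 1) u u).re)
    (Dinf : Set H)
    (hDinf : Dinf = {u : H | (∀ n, u ∈ D n) ∧
      BddAbove (Set.range fun n => (a n u u).re)})
    (ainf : H → H → ℂ)
    (hainf : ∀ u ∈ Dinf, ∀ v ∈ Dinf,
      Tendsto (fun n => a n u v) atTop (nhds (ainf u v))) :
    -- the limit form is symmetric and nonnegative
    (∀ u ∈ Dinf, ∀ v ∈ Dinf, ainf u v = (starRingEnd ℂ) (ainf v u)) ∧
    (∀ u ∈ Dinf, 0 ≤ (ainf u u).re) ∧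
    -- the limit form is closed
    (∀ f : ℕ → H, (∀ m, f m ∈ Dinf) →
      (∀ ε : ℝ, 0 < ε → ∃ N : ℕ, ∀ k m, N ≤ k → N ≤ m →
        (ainf (f k - f m) (f k - f m)).re + ‖f k - f m‖ ^ 2 < ε) →
      ∃ u ∈ Dinf, Tendsto (fun m => (ainf (f m - u) (f m - u)).re + ‖f m - u‖ ^ 2)
        atTop (nhds 0)) ∧
    -- strong convergence of the pseudoresolvents for λ < 0
    (∀ lam : ℝ, lam < 0 → ∀ u : H, ∀ w : ℕ → H, ∀ winf : H,
      (∀ n, w n ∈ D n ∧ ∀ v ∈ D n,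
        (lam : ℂ) * (inner ℂ v (w n) : ℂ) - a n (w n) v = (inner ℂ v u : ℂ)) →
      (winf ∈ Dinf ∧ ∀ v ∈ Dinf,
        (lam : ℂ) * (inner ℂ v winf : ℂ) - ainf winf v = (inner ℂ v u : ℂ)) →
      Tendsto w atTop (nhds winf)) :=
  simon_monotone_convergence_of_forms_general D a hadd₁ hsmul₁ hsymm hnonneg hclosed hmonoD hmono
    Dinf hDinf ainf hainf
end

section
/- Let H be a Hilbert space, H₀ ⊆ H a closed subspace with orthogonal projection P, and for each κ ≥ 1 let T_κ(t) be a contraction C₀-semigroup on H such that for all u ∈ H and t > 0, T_κ(t)u → e^{tB}Pu as κ → ∞, where B is a bounded operator on H₀. Then for every Bochner-integrable f : [0,t₀] → H and u₀ ∈ H, the mild solutions z_κ(t) = T_κ(t)u₀ + ∫₀ᵗ T_κ(t−s)f(s) ds converge for each t ∈ (0,t₀] to z(t) = e^{tB}Pu₀ + ∫₀ᵗ e^{(t−s)B}Pf(s) ds. -/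
/-!
For each `t` the homogeneous part `T_κ(t)u₀` converges by hypothesis. In the Duhamel integral the
integrand `s ↦ T_κ(t - s) f(s)` converges for every `s < t`, hence almost everywhere on `[0, t]`,
and the contraction property dominates it by `‖f‖`, so dominated convergence applies. The only
technical point is measurability of the integrand: a strongly continuous, uniformly bounded family
of operators is jointly continuous in time and vector.
-/

open Filter MeasureTheory NormedSpace Topology Set

section

variable {𝕜 E F : Type*} [NontriviallyNormedField 𝕜] [NormedAddCommGroup E] [NormedSpace 𝕜 E]
  [NormedAddCommGroup F] [NormedSpace 𝕜 F]

theorem ContinuousOn.clm_apply_of_forall_norm_le {X : Type*} [TopologicalSpace X] {s : Set X}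
    {T : X → E →L[𝕜] F} {C : ℝ} (hT : ∀ u, ContinuousOn (fun x => T x u) s)
    (hC : ∀ x ∈ s, ‖T x‖ ≤ C) :
    ContinuousOn (fun p : X × E => T p.1 p.2) (s ×ˢ univ) := by
  rintro ⟨a, u⟩ ⟨ha, -⟩
  have hdiff : Tendsto (fun p : X × E => T p.1 (p.2 - u)) (𝓝[s ×ˢ univ] (a, u)) (𝓝 0) := by
    refine squeeze_zero_norm' (a := fun p => C * ‖p.2 - u‖) ?_ ?_
    · filter_upwards [self_mem_nhdsWithin] with p hp using (T p.1).le_of_opNorm_le (hC p.1 hp.1) _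
    · have : Tendsto (fun p : X × E => ‖p.2 - u‖) (𝓝 (a, u)) (𝓝 0) :=
        tendsto_iff_norm_sub_tendsto_zero.1 (continuous_snd.tendsto (a, u))
      simpa using (tendsto_nhdsWithin_of_tendsto_nhds this).const_mul C
  have hfixed : ContinuousWithinAt ((fun x => T x u) ∘ Prod.fst) (s ×ˢ (univ : Set E)) (a, u) :=
    (hT u a ha).comp continuousWithinAt_fst mapsTo_fst_prod
  simpa [ContinuousWithinAt] using hdiff.add hfixed

theorem aestronglyMeasurable_clm_apply_sub {T : ℝ → E →L[𝕜] F} {C : ℝ}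
    (hT : ∀ u, ContinuousOn (fun τ => T τ u) (Ici 0)) (hC : ∀ τ ∈ Ici 0, ‖T τ‖ ≤ C)
    {μ : Measure ℝ} {f : ℝ → E} {t : ℝ} (hf : AEStronglyMeasurable f μ) (hμ : ∀ᵐ s ∂μ, s ≤ t) :
    AEStronglyMeasurable (fun s => T (t - s) (f s)) μ := by
  have hjoint : Continuous fun p : ℝ × E => T (max p.1 0) p.2 :=
    (ContinuousOn.clm_apply_of_forall_norm_le hT hC).comp_continuous
      ((continuous_fst.max continuous_const).prodMk continuous_snd)
      fun p => ⟨le_max_right p.1 0, mem_univ _⟩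
  refine (hjoint.comp_aestronglyMeasurable
    ((continuous_sub_left t).aestronglyMeasurable.prodMk hf)).congr ?_
  filter_upwards [hμ] with s hs
  simp [max_eq_left (sub_nonneg.2 hs)]

variable [NormedSpace ℝ F]

theorem tendsto_integral_clm_apply_of_tendsto {α ι : Type*} [MeasurableSpace α] {μ : Measure α}
    {l : Filter ι} [l.IsCountablyGenerated] {T : ι → α → E →L[𝕜] F} {f : α → E} {g : α → F}
    {C : ℝ} (hmeas : ∀ᶠ i in l, AEStronglyMeasurable (fun a => T i a (f a)) μ)
    (hC : ∀ᶠ i in l, ∀ᵐ a ∂μ, ‖T i a‖ ≤ C) (hf : Integrable f μ)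
    (hlim : ∀ᵐ a ∂μ, Tendsto (fun i => T i a (f a)) l (𝓝 (g a))) :
    Tendsto (fun i => ∫ a, T i a (f a) ∂μ) l (𝓝 (∫ a, g a ∂μ)) :=
  tendsto_integral_filter_of_dominated_convergence (fun a => C * ‖f a‖) hmeas
    (hC.mono fun i hi => hi.mono fun a ha => (T i a).le_of_opNorm_le ha _) (hf.norm.const_mul C)
    hlim

theorem tendsto_setIntegral_Icc_clm_apply_sub {ι : Type*} {l : Filter ι} [l.IsCountablyGenerated]
    {T : ι → ℝ → E →L[𝕜] F} {L : ℝ → E → F} {C : ℝ}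
    (hT : ∀ᶠ i in l, ∀ u, ContinuousOn (fun τ => T i τ u) (Ici 0))
    (hC : ∀ᶠ i in l, ∀ τ ∈ Ici 0, ‖T i τ‖ ≤ C)
    (hL : ∀ u, ∀ τ > 0, Tendsto (fun i => T i τ u) l (𝓝 (L τ u)))
    {f : ℝ → E} {t : ℝ} (hf : IntegrableOn f (Icc 0 t)) :
    Tendsto (fun i => ∫ s in Icc 0 t, T i (t - s) (f s)) l
      (𝓝 (∫ s in Icc 0 t, L (t - s) (f s))) := by
  have hmem : ∀ᵐ s ∂volume.restrict (Icc 0 t), s ∈ Icc 0 t := ae_restrict_mem measurableSet_Icc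
  have hne : ∀ᵐ s ∂volume.restrict (Icc 0 t), s ≠ t := ae_restrict_of_ae (Measure.ae_ne volume t)
  refine tendsto_integral_clm_apply_of_tendsto (C := C) ?_ ?_ hf ?_
  · filter_upwards [hT, hC] with i hTi hCi
    exact aestronglyMeasurable_clm_apply_sub hTi hCi hf.aestronglyMeasurable
      (hmem.mono fun s hs => hs.2)
  · filter_upwards [hC] with i hCi
    filter_upwards [hmem] with s hs using hCi _ (sub_nonneg.2 hs.2)
  · filter_upwards [hmem, hne] with s hs hst
    exact hL _ _ (sub_pos.2 (lt_of_le_of_ne hs.2 hst))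

end

theorem mild_solutions_converge_of_semigroup_convergence_general
    {H H₀ : Type*} [NormedAddCommGroup H] [InnerProductSpace ℂ H] [CompleteSpace H]
    [NormedAddCommGroup H₀] [InnerProductSpace ℂ H₀] [CompleteSpace H₀]
    (ι : H₀ →ₗᵢ[ℂ] H)
    (P : H →L[ℂ] H₀)
    (B : H₀ →L[ℂ] H₀)
    (T : ℝ → ℝ → H →L[ℂ] H)
    (hcont : ∀ κ : ℝ, 1 ≤ κ → ∀ u : H, ContinuousOn (fun t => T κ t u) (Set.Ici 0))
    (hcontr : ∀ κ : ℝ, 1 ≤ κ → ∀ t : ℝ, 0 ≤ t → ‖T κ t‖ ≤ 1)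
    (hconv : ∀ (u : H) (t : ℝ), 0 < t →
      Tendsto (fun κ => T κ t u) atTop (nhds (ι (exp (t • B) (P u)))))
    (t₀ : ℝ) (f : ℝ → H) (hf : IntegrableOn f (Set.Icc 0 t₀)) (u₀ : H) :
    ∀ t ∈ Set.Ioc 0 t₀,
      Tendsto (fun κ => T κ t u₀ + ∫ s in Set.Icc 0 t, T κ (t - s) (f s)) atTop
        (nhds (ι (exp (t • B) (P u₀)) +
          ∫ s in Set.Icc 0 t, ι (exp ((t - s) • B) (P (f s))))) := by
  rintro t ⟨ht, htt₀⟩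
  have hκ : ∀ᶠ κ : ℝ in atTop, 1 ≤ κ := eventually_ge_atTop 1
  refine (hconv u₀ t ht).add (tendsto_setIntegral_Icc_clm_apply_sub (L := fun τ u =>
    ι (exp (τ • B) (P u))) (hκ.mono hcont) (hκ.mono hcontr) hconv
    (hf.mono_set (Icc_subset_Icc_right htt₀)))

/-- If contraction `C₀`-semigroups `T_κ` on a Hilbert space `H` converge strongly (for each
`t > 0`) to the degenerate semigroup `e^{tB} P`, where `P` is the orthogonal projection onto a
closed subspace `H₀` (realized as a Hilbert space isometrically embedded in `H` via `ι`) and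
`B` is a bounded operator on `H₀`, then the mild solutions
`z_κ(t) = T_κ(t)u₀ + ∫₀ᵗ T_κ(t−s) f(s) ds` of the inhomogeneous Cauchy problems converge, for
each `t ∈ (0, t₀]`, to `e^{tB}Pu₀ + ∫₀ᵗ e^{(t−s)B} P f(s) ds`. -/
theorem mild_solutions_converge_of_semigroup_convergence
    {H H₀ : Type*} [NormedAddCommGroup H] [InnerProductSpace ℂ H] [CompleteSpace H]
    [NormedAddCommGroup H₀] [InnerProductSpace ℂ H₀] [CompleteSpace H₀]
    (ι : H₀ →ₗᵢ[ℂ] H) (hclosed : IsClosed (Set.range ι))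
    (P : H →L[ℂ] H₀)
    (hP₁ : ∀ v : H₀, P (ι v) = v)
    (hP₂ : ∀ u : H, ∀ v : H₀, (inner ℂ (u - ι (P u)) (ι v) : ℂ) = 0)
    (B : H₀ →L[ℂ] H₀)
    (T : ℝ → ℝ → H →L[ℂ] H)
    (hsg0 : ∀ κ : ℝ, 1 ≤ κ → T κ 0 = ContinuousLinearMap.id ℂ H)
    (hsg : ∀ κ : ℝ, 1 ≤ κ → ∀ s t : ℝ, 0 ≤ s → 0 ≤ t →
      T κ (s + t) = (T κ s).comp (T κ t))
    (hcont : ∀ κ : ℝ, 1 ≤ κ → ∀ u : H, ContinuousOn (fun t => T κ t u) (Set.Ici 0))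
    (hcontr : ∀ κ : ℝ, 1 ≤ κ → ∀ t : ℝ, 0 ≤ t → ‖T κ t‖ ≤ 1)
    (hconv : ∀ (u : H) (t : ℝ), 0 < t →
      Tendsto (fun κ => T κ t u) atTop (nhds (ι (exp (t • B) (P u)))))
    (t₀ : ℝ) (ht₀ : 0 < t₀) (f : ℝ → H) (hf : IntegrableOn f (Set.Icc 0 t₀)) (u₀ : H) :
    ∀ t ∈ Set.Ioc 0 t₀,
      Tendsto (fun κ => T κ t u₀ + ∫ s in Set.Icc 0 t, T κ (t - s) (f s)) atTop
        (nhds (ι (exp (t • B) (P u₀)) +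
          ∫ s in Set.Icc 0 t, ι (exp ((t - s) • B) (P (f s))))) :=
  mild_solutions_converge_of_semigroup_convergence_general ι P B T hcont hcontr hconv t₀ f hf u₀
end

section
/- Let Ω_k, Ω_ℓ ⊂ ℝᵈ be disjoint open sets with Lipschitz boundaries Γ_k, Γ_ℓ. Suppose V ⊆ Γ_k ∩ Γ_ℓ is a nonempty set, relatively open in both Γ_k and Γ_ℓ, such that there exist: cylinders C_i = B_i × (a_i, b_i) (B_i an open ball in ℝ^{d−1}), an isometry J of ℝᵈ, and Lipschitz functions g_i : B_i → ℝ (i = k, ℓ) with, setting φ_i(w,t) = t − g_i(w): Ω_k ∩ C_k = {φ_k < 0}, C_k \ closure(Ω_k) = {φ_k > 0}, V = {φ_k = 0}, and Ω_ℓ ∩ C_ℓ = J{φ_ℓ < 0}, C_ℓ \ closure(Ω_ℓ) = J{φ_ℓ > 0}, V = J{φ_ℓ = 0}. Then the set {φ_k > 0} ∩ J{φ_ℓ > 0} ∩ C_k ∩ C_ℓ is empty, and consequently the open set U = C_k ∩ C_ℓ satisfies V ⊆ U and U \ V ⊆ Ω_k ∪ Ω_ℓ. -/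
/-!
Inside `U = C_k ∩ J C_ℓ` every point lies in `Ω_k`, on `V`, or in the exterior
`E_k = C_k \ closure Ω_k` above the graph of `g_k`, and likewise for `ℓ`. The open set
`W = E_k ∩ E_ℓ` misses the open sets `Ω_k` and `Ω_ℓ`, and it also stays away from `V`: near a
point of `V`, the part of a small box above the Lipschitz graph of `g_k` is connected, is covered by
the disjoint open sets `Ω_ℓ` and `E_ℓ`, and meets `Ω_ℓ` because `V ⊆ ∂Ω_ℓ`; so it misses `E_ℓ`.
Hence `W` is clopen in the convex set `U`, which contains points of `V`, and `W = ∅`.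
-/

open Set Filter Topology Metric NNReal

section Interface

variable {X : Type*} [TopologicalSpace X]

theorem IsPreconnected.disjoint_of_subset_union {U A W : Set X} (hU : IsPreconnected U)
    (hW : IsOpen W) (hUAW : U ⊆ A ∪ W) (hAW : Disjoint A (closure W)) (hUA : (U ∩ A).Nonempty) :
    Disjoint U W := by
  have hW' : Disjoint (closure W)ᶜ W := disjoint_compl_left.mono_right subset_closure
  have hUW : U ⊆ (closure W)ᶜ :=
    hU.subset_left_of_subset_union isClosed_closure.isOpen_compl hW hW'
      (hUAW.trans (union_subset_union_left _ hAW.subset_compl_right))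
      (hUA.mono (inter_subset_inter_right _ hAW.subset_compl_right))
  exact hW'.mono_left hUW

theorem notMem_closure_inter_of_isPreconnected {Ω W W' Q : Set X} {p : X} (hΩ : IsOpen Ω)
    (hW' : IsOpen W') (hΩW' : Disjoint Ω W') (hp : p ∈ closure Ω) (hQ : Q ∈ 𝓝 p)
    (hQW : IsPreconnected (Q ∩ W)) (hQΩ : Q ∩ Ω ⊆ W) (hQW' : Q ∩ W ⊆ Ω ∪ W') :
    p ∉ closure (W ∩ W') := by
  obtain ⟨y, hyQ, hyΩ⟩ := mem_closure_iff_nhds.1 hp Q hQ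
  have hQWΩ : Q ∩ W ⊆ Ω :=
    hQW.subset_left_of_subset_union hΩ hW' hΩW' hQW' ⟨y, ⟨hyQ, hQΩ ⟨hyQ, hyΩ⟩⟩, hyΩ⟩
  intro h
  obtain ⟨z, hzQ, hzW, hzW'⟩ := mem_closure_iff_nhds.1 h Q hQ
  exact disjoint_left.1 hΩW' (hQWΩ ⟨hzQ, hzW⟩) hzW'

theorem IsPreconnected.disjoint_inter_and_diff_subset_union_of_interface {Ωk Ωl V U Wk Wl : Set X}
    (hU : IsPreconnected U) (hΩk : IsOpen Ωk) (hΩl : IsOpen Ωl) (hdisj : Disjoint Ωk Ωl)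
    (hV : V ⊆ frontier Ωl) (hVU : V ⊆ U) (hVne : V.Nonempty) (hWk : IsOpen Wk) (hWl : IsOpen Wl)
    (hk : U ⊆ Ωk ∪ V ∪ Wk) (hl : U ⊆ Ωl ∪ V ∪ Wl)
    (hΩkWk : Disjoint Ωk Wk) (hVWk : Disjoint V Wk) (hΩlWl : Disjoint Ωl Wl)
    (hloc : ∀ p ∈ V, ∃ Q ∈ 𝓝 p, Q ⊆ U ∧ IsPreconnected (Q ∩ Wk)) :
    Disjoint U (Wk ∩ Wl) ∧ U \ V ⊆ Ωk ∪ Ωl := by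
  have hVΩl : Disjoint V Ωl := by
    rw [hΩl.frontier_eq] at hV
    exact disjoint_sdiff_left.mono_left hV
  have hcover : U ⊆ Ωk ∪ Ωl ∪ V ∪ (Wk ∩ Wl) := by
    intro x hx
    rcases hk hx with (hxk | hxV) | hxWk
    · exact Or.inl (Or.inl (Or.inl hxk))
    · exact Or.inl (Or.inr hxV)
    rcases hl hx with (hxl | hxV) | hxWl
    · exact Or.inl (Or.inl (Or.inr hxl))
    · exact Or.inl (Or.inr hxV)
    · exact Or.inr ⟨hxWk, hxWl⟩
  have hVW : ∀ p ∈ V, p ∉ closure (Wk ∩ Wl) := by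
    intro p hp
    obtain ⟨Q, hQ, hQU, hQWk⟩ := hloc p hp
    refine notMem_closure_inter_of_isPreconnected hΩl hWl hΩlWl
      (frontier_subset_closure (hV hp)) hQ hQWk ?_ ?_
    · rintro x ⟨hxQ, hxl⟩
      rcases hk (hQU hxQ) with (hxk | hxV) | hxWk
      · exact absurd hxl (disjoint_left.1 hdisj hxk)
      · exact absurd hxl (disjoint_left.1 hVΩl hxV)
      · exact hxWk
    · rintro x ⟨hxQ, hxWk⟩
      rcases hl (hQU hxQ) with (hxl | hxV) | hxWl
      · exact Or.inl hxl
      · exact absurd hxWk (disjoint_left.1 hVWk hxV)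
      · exact Or.inr hxWl
  have hUW : Disjoint U (Wk ∩ Wl) := by
    refine hU.disjoint_of_subset_union (hWk.inter hWl) hcover ?_
      (hVne.mono fun v hv => ⟨hVU hv, Or.inr hv⟩)
    refine disjoint_union_left.2 ⟨disjoint_union_left.2 ⟨?_, ?_⟩, disjoint_left.2 hVW⟩
    · exact (hΩkWk.mono_right inter_subset_left).closure_right hΩk
    · exact (hΩlWl.mono_right inter_subset_right).closure_right hΩl
  refine ⟨hUW, ?_⟩
  rintro x ⟨hxU, hxV⟩
  rcases hcover hxU with ((hxk | hxl) | hxV') | hxW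
  · exact Or.inl hxk
  · exact Or.inr hxl
  · exact absurd hxV' hxV
  · exact absurd hxW (disjoint_left.1 hUW hxU)

end Interface

section Trichotomy

variable {X Y α : Type*} [LinearOrder α] {f g : X → α}

theorem subset_union_union_of_inter_eq_sep {C Ω V : Set X}
    (hΩ : Ω ∩ C = {x ∈ C | f x < g x}) (hV : V = {x ∈ C | f x = g x}) :
    C ⊆ Ω ∪ V ∪ {x ∈ C | g x < f x} := by
  intro x hx
  rcases lt_trichotomy (f x) (g x) with h | h | h
  · exact Or.inl (Or.inl (hΩ.symm ▸ ⟨hx, h⟩ : x ∈ Ω ∩ C).1)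
  · exact Or.inl (Or.inr (hV ▸ ⟨hx, h⟩))
  · exact Or.inr ⟨hx, h⟩

theorem image_subset_union_union_of_inter_eq_image_sep {C : Set X} {Ω V : Set Y} {e : X → Y}
    (hΩ : Ω ∩ e '' C = e '' {x ∈ C | f x < g x}) (hV : V = e '' {x ∈ C | f x = g x}) :
    e '' C ⊆ Ω ∪ V ∪ e '' {x ∈ C | g x < f x} := by
  rintro _ ⟨x, hx, rfl⟩
  rcases lt_trichotomy (f x) (g x) with h | h | h
  · exact Or.inl (Or.inl (hΩ.symm ▸ mem_image_of_mem e ⟨hx, h⟩ : e x ∈ Ω ∩ e '' C).1)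
  · exact Or.inl (Or.inr (hV ▸ mem_image_of_mem e ⟨hx, h⟩))
  · exact Or.inr (mem_image_of_mem e ⟨hx, h⟩)

end Trichotomy

theorem Convex.isometryEquiv_image {E F : Type*} [NormedAddCommGroup E] [NormedSpace ℝ E]
    [NormedAddCommGroup F] [NormedSpace ℝ F] {s : Set E} (hs : Convex ℝ s) (J : E ≃ᵢ F) :
    Convex ℝ (J '' s) := by
  simpa using hs.affine_image J.toRealAffineIsometryEquiv.toAffineMap

namespace LipschitzWith

variable {E : Type*} [NormedAddCommGroup E] [NormedSpace ℝ E] {g : E → ℝ} {K : ℝ≥0}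

theorem isPreconnected_ball_prod_ball_inter_supergraph (hg : LipschitzWith K g) (w : E)
    {r ε : ℝ} (hr : 0 < r) (hrε : K * r < ε) :
    IsPreconnected ((ball w r ×ˢ ball (g w) ε) ∩ {z | g z.1 < z.2}) := by
  -- `m` lies above the graph over the whole ball, so every point of the set reaches `(w, m)` by a
  -- vertical segment followed by a horizontal one.
  obtain ⟨m, hKrm, hmε⟩ := exists_between (add_lt_add_left hrε (g w))
  have hKr : 0 ≤ (K : ℝ) * r := by positivity
  have hm : m ∈ ball (g w) ε := by
    rw [Real.ball_eq_Ioo]; constructor <;> linarith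
  have hgm : ∀ u ∈ ball w r, g u < m := fun u hu => by
    have hgu : g u - g w ≤ K * r :=
      (le_abs_self _).trans <| (hg.dist_le_mul u w).trans <|
        mul_le_mul_of_nonneg_left (mem_ball.1 hu).le K.coe_nonneg
    linarith
  refine isPreconnected_of_forall (w, m) ?_
  rintro ⟨u, t⟩ ⟨⟨hu, ht⟩, hgt⟩
  refine ⟨({u} ×ˢ uIcc t m) ∪ (segment ℝ u w ×ˢ {m}), ?_, Or.inr ⟨right_mem_segment ℝ u w, rfl⟩,
    Or.inl ⟨rfl, left_mem_uIcc⟩, ?_⟩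
  · rintro ⟨v, s⟩ (⟨rfl, hs⟩ | ⟨hv, rfl⟩)
    · exact ⟨⟨hu, (convex_ball _ _).ordConnected.uIcc_subset ht hm hs⟩,
        (lt_min hgt (hgm v hu)).trans_le hs.1⟩
    · have hv : v ∈ ball w r := (convex_ball w r).segment_subset hu (mem_ball_self hr) hv
      exact ⟨⟨hv, hm⟩, hgm v hv⟩
  · exact (isPreconnected_singleton.prod isPreconnected_uIcc).union (u, m) ⟨rfl, right_mem_uIcc⟩
      ⟨left_mem_segment ℝ u w, rfl⟩
      ((convex_segment u w).isPreconnected.prod isPreconnected_singleton)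

theorem exists_mem_nhds_isPreconnected_inter_supergraph (hg : LipschitzWith K g) (w : E)
    {N : Set (E × ℝ)} (hN : N ∈ 𝓝 (w, g w)) :
    ∃ Q ∈ 𝓝 (w, g w), Q ⊆ N ∧ IsPreconnected (Q ∩ {z | g z.1 < z.2}) := by
  obtain ⟨ε, hε, hεN⟩ := Metric.mem_nhds_iff.1 hN
  have hK : (0 : ℝ) < K + 1 := by positivity
  have hr : 0 < ε / (K + 1) := div_pos hε hK
  have hrε : ε / (K + 1) ≤ ε := div_le_self hε.le (by simp)
  have hKrε : K * (ε / (K + 1)) < ε := by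
    rw [mul_div_assoc', div_lt_iff₀ hK]; linarith
  refine ⟨ball w (ε / (K + 1)) ×ˢ ball (g w) ε,
    prod_mem_nhds (ball_mem_nhds w hr) (ball_mem_nhds _ hε), ?_,
    hg.isPreconnected_ball_prod_ball_inter_supergraph w hr hKrε⟩
  rw [← ball_prod_same] at hεN
  exact (Set.prod_mono (ball_subset_ball hrε) le_rfl).trans hεN

end LipschitzWith

noncomputable def initLastEquiv (d : ℕ) :
    EuclideanSpace ℝ (Fin (d + 1)) ≃L[ℝ] EuclideanSpace ℝ (Fin d) × ℝ :=
  LinearEquiv.toContinuousLinearEquiv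
    { toFun := fun x => (WithLp.toLp 2 (fun i => x (Fin.castSucc i)), x (Fin.last d))
      invFun := fun z => WithLp.toLp 2 (Fin.snoc (α := fun _ => ℝ) z.1 z.2)
      map_add' := fun _ _ => rfl
      map_smul' := fun _ _ => rfl
      left_inv := fun x => by ext i; refine Fin.lastCases ?_ (fun j => ?_) i <;> simp
      right_inv := fun z => by ext <;> simp }

section Cylinder

variable {d : ℕ} {B : Set (EuclideanSpace ℝ (Fin d))} {I : Set ℝ}

theorem isOpen_cylinder (hB : IsOpen B) (hI : IsOpen I) :
    IsOpen {x : EuclideanSpace ℝ (Fin (d + 1)) |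
      WithLp.toLp 2 (fun i => x (Fin.castSucc i)) ∈ B ∧ x (Fin.last d) ∈ I} :=
  (hB.prod hI).preimage (initLastEquiv d).continuous

theorem convex_cylinder (hB : Convex ℝ B) (hI : Convex ℝ I) :
    Convex ℝ {x : EuclideanSpace ℝ (Fin (d + 1)) |
      WithLp.toLp 2 (fun i => x (Fin.castSucc i)) ∈ B ∧ x (Fin.last d) ∈ I} :=
  (hB.prod hI).linear_preimage (initLastEquiv d).toLinearEquiv.toLinearMap

end Cylinder

theorem LipschitzWith.exists_mem_nhds_isPreconnected_inter_supergraph_initLast {d : ℕ}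
    {g : EuclideanSpace ℝ (Fin d) → ℝ} {K : ℝ≥0} (hg : LipschitzWith K g)
    {p : EuclideanSpace ℝ (Fin (d + 1))}
    (hp : p (Fin.last d) = g (WithLp.toLp 2 (fun i => p (Fin.castSucc i))))
    {N : Set (EuclideanSpace ℝ (Fin (d + 1)))} (hN : N ∈ 𝓝 p) :
    ∃ Q ∈ 𝓝 p, Q ⊆ N ∧
      IsPreconnected
        (Q ∩ {x | g (WithLp.toLp 2 (fun i => x (Fin.castSucc i))) < x (Fin.last d)}) := by
  let e := (initLastEquiv d).toHomeomorph
  have hep : e p = (WithLp.toLp 2 (fun i => p (Fin.castSucc i)),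
      g (WithLp.toLp 2 (fun i => p (Fin.castSucc i)))) := by
    rw [← hp]; rfl
  have hN' : e.symm ⁻¹' N ∈ 𝓝 (e p) :=
    e.symm.continuous.continuousAt.preimage_mem_nhds (by rwa [e.symm_apply_apply])
  rw [hep] at hN'
  obtain ⟨Q, hQ, hQN, hQc⟩ := hg.exists_mem_nhds_isPreconnected_inter_supergraph _ hN'
  refine ⟨e ⁻¹' Q, e.continuous.continuousAt.preimage_mem_nhds (hep ▸ hQ), ?_,
    e.isPreconnected_preimage.2 hQc⟩
  intro x hx
  simpa using hQN hx

theorem lipschitz_interface_cylinders_general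
    {d : ℕ}
    (Ωk Ωl : Set (EuclideanSpace ℝ (Fin (d + 1))))
    (hΩk : IsOpen Ωk) (hΩl : IsOpen Ωl) (hdisj : Disjoint Ωk Ωl)
    (V : Set (EuclideanSpace ℝ (Fin (d + 1)))) (hVne : V.Nonempty)
    (hVsub : V ⊆ frontier Ωk ∩ frontier Ωl)
    (Bk Bl : Set (EuclideanSpace ℝ (Fin d)))
    (ck cl : EuclideanSpace ℝ (Fin d)) (rk rl : ℝ)
    (hBk : Bk = Metric.ball ck rk) (hBl : Bl = Metric.ball cl rl)
    (ak bk al bl : ℝ)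
    (Ck Cl : Set (EuclideanSpace ℝ (Fin (d + 1))))
    (hCk : Ck = {x | (WithLp.toLp 2 (fun i => x (Fin.castSucc i))) ∈ Bk ∧ x (Fin.last d) ∈ Ioo ak bk})
    (hCl : Cl = {x | (WithLp.toLp 2 (fun i => x (Fin.castSucc i))) ∈ Bl ∧ x (Fin.last d) ∈ Ioo al bl})
    (gk gl : EuclideanSpace ℝ (Fin d) → ℝ) (Kk : NNReal)
    (hgk : LipschitzWith Kk gk)
    (J : EuclideanSpace ℝ (Fin (d + 1)) ≃ᵢ EuclideanSpace ℝ (Fin (d + 1)))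
    (hk₁ : Ωk ∩ Ck = {x ∈ Ck | x (Fin.last d) < gk (WithLp.toLp 2 (fun i => x (Fin.castSucc i)))})
    (hk₂ : Ck \ closure Ωk = {x ∈ Ck | gk (WithLp.toLp 2 (fun i => x (Fin.castSucc i))) < x (Fin.last d)})
    (hk₃ : V = {x ∈ Ck | x (Fin.last d) = gk (WithLp.toLp 2 (fun i => x (Fin.castSucc i)))})
    (hl₁ : Ωl ∩ J '' Cl =
      J '' {x ∈ Cl | x (Fin.last d) < gl (WithLp.toLp 2 (fun i => x (Fin.castSucc i)))})
    (hl₂ : (J '' Cl) \ closure Ωl =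
      J '' {x ∈ Cl | gl (WithLp.toLp 2 (fun i => x (Fin.castSucc i))) < x (Fin.last d)})
    (hl₃ : V = J '' {x ∈ Cl | x (Fin.last d) = gl (WithLp.toLp 2 (fun i => x (Fin.castSucc i)))}) :
    {x ∈ Ck | gk (WithLp.toLp 2 (fun i => x (Fin.castSucc i))) < x (Fin.last d)} ∩
        (J '' {x ∈ Cl | gl (WithLp.toLp 2 (fun i => x (Fin.castSucc i))) < x (Fin.last d)}) = ∅ ∧
    V ⊆ Ck ∩ J '' Cl ∧
    (Ck ∩ J '' Cl) \ V ⊆ Ωk ∪ Ωl := by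
  subst hBk hBl
  set Wk := {x ∈ Ck | gk (WithLp.toLp 2 (fun i => x (Fin.castSucc i))) < x (Fin.last d)} with hWk
  set Wl := J '' {x ∈ Cl | gl (WithLp.toLp 2 (fun i => x (Fin.castSucc i))) < x (Fin.last d)}
  have hCk_open : IsOpen Ck := hCk ▸ isOpen_cylinder isOpen_ball isOpen_Ioo
  have hJCl_open : IsOpen (J '' Cl) :=
    J.toHomeomorph.isOpenMap _ (hCl ▸ isOpen_cylinder isOpen_ball isOpen_Ioo)
  have hU : IsPreconnected (Ck ∩ J '' Cl) :=
    ((hCk ▸ convex_cylinder (convex_ball _ _) (convex_Ioo _ _)).inter <|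
      (hCl ▸ convex_cylinder (convex_ball _ _) (convex_Ioo _ _)).isometryEquiv_image J).isPreconnected
  have hVU : V ⊆ Ck ∩ J '' Cl :=
    subset_inter (hk₃ ▸ sep_subset _ _) (hl₃ ▸ image_mono (sep_subset _ _))
  have hk : Ck ⊆ Ωk ∪ V ∪ Wk := subset_union_union_of_inter_eq_sep hk₁ hk₃
  have hl : J '' Cl ⊆ Ωl ∪ V ∪ Wl := image_subset_union_union_of_inter_eq_image_sep hl₁ hl₃
  have hloc : ∀ p ∈ V, ∃ Q ∈ 𝓝 p, Q ⊆ Ck ∩ J '' Cl ∧ IsPreconnected (Q ∩ Wk) := by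
    intro p hp
    obtain ⟨Q, hQ, hQU, hQc⟩ := hgk.exists_mem_nhds_isPreconnected_inter_supergraph_initLast
      (hk₃ ▸ hp).2 ((hCk_open.inter hJCl_open).mem_nhds (hVU hp))
    refine ⟨Q, hQ, hQU, ?_⟩
    rwa [hWk, ← sep_eq_inter_sep (hQU.trans inter_subset_left)]
  have hΩkWk : Disjoint Ωk Wk := hk₂ ▸ disjoint_sdiff_right.mono_left subset_closure
  have hΩlWl : Disjoint Ωl Wl := hl₂ ▸ disjoint_sdiff_right.mono_left subset_closure
  have hVWk : Disjoint V Wk := hk₃ ▸ disjoint_left.2 fun _ hx hx' => hx'.2.ne' hx.2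
  obtain ⟨hUW, hcover⟩ := hU.disjoint_inter_and_diff_subset_union_of_interface hΩk hΩl hdisj
    (fun _ hp => (hVsub hp).2) hVU hVne
    (hk₂ ▸ hCk_open.sdiff isClosed_closure) (hl₂ ▸ hJCl_open.sdiff isClosed_closure)
    (inter_subset_left.trans hk) (inter_subset_right.trans hl) hΩkWk hVWk hΩlWl hloc
  have hWU : Wk ∩ Wl ⊆ Ck ∩ J '' Cl :=
    inter_subset_inter (sep_subset _ _) (image_mono (sep_subset _ _))
  exact ⟨disjoint_self.1 (hUW.mono_left hWU), hVU, hcover⟩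

/-- Key geometric step in the proof that triple interfaces are negligible.  Suppose the common
interface `V` of two disjoint open sets `Ω_k, Ω_ℓ` is represented in two cylinders
`C_i = B_i × (a_i, b_i)` as the graph of Lipschitz functions `g_i` (via `φ_i(w,t) = t − g_i(w)`,
the second chart being rotated by an isometry `J`), with `Ω_k ∩ C_k = {φ_k < 0}`,
`C_k \ closure Ω_k = {φ_k > 0}`, `V = {φ_k = 0}`, and the analogous identities for `ℓ` through
`J`.  Then `{φ_k > 0} ∩ J{φ_ℓ > 0} = ∅`; consequently `U := C_k ∩ J C_ℓ` is an open set with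
`V ⊆ U` and `U \ V ⊆ Ω_k ∪ Ω_ℓ`. -/
theorem lipschitz_interface_cylinders
    {d : ℕ}
    (Ωk Ωl : Set (EuclideanSpace ℝ (Fin (d + 1))))
    (hΩk : IsOpen Ωk) (hΩl : IsOpen Ωl) (hdisj : Disjoint Ωk Ωl)
    (V : Set (EuclideanSpace ℝ (Fin (d + 1)))) (hVne : V.Nonempty)
    (hVsub : V ⊆ frontier Ωk ∩ frontier Ωl)
    (Bk Bl : Set (EuclideanSpace ℝ (Fin d)))
    (ck cl : EuclideanSpace ℝ (Fin d)) (rk rl : ℝ)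
    (hBk : Bk = Metric.ball ck rk) (hBl : Bl = Metric.ball cl rl)
    (ak bk al bl : ℝ)
    (Ck Cl : Set (EuclideanSpace ℝ (Fin (d + 1))))
    (hCk : Ck = {x | (WithLp.toLp 2 (fun i => x (Fin.castSucc i))) ∈ Bk ∧ x (Fin.last d) ∈ Ioo ak bk})
    (hCl : Cl = {x | (WithLp.toLp 2 (fun i => x (Fin.castSucc i))) ∈ Bl ∧ x (Fin.last d) ∈ Ioo al bl})
    (gk gl : EuclideanSpace ℝ (Fin d) → ℝ) (Kk Kl : NNReal)
    (hgk : LipschitzWith Kk gk) (hgl : LipschitzWith Kl gl)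
    (J : EuclideanSpace ℝ (Fin (d + 1)) ≃ᵢ EuclideanSpace ℝ (Fin (d + 1)))
    (hk₁ : Ωk ∩ Ck = {x ∈ Ck | x (Fin.last d) < gk (WithLp.toLp 2 (fun i => x (Fin.castSucc i)))})
    (hk₂ : Ck \ closure Ωk = {x ∈ Ck | gk (WithLp.toLp 2 (fun i => x (Fin.castSucc i))) < x (Fin.last d)})
    (hk₃ : V = {x ∈ Ck | x (Fin.last d) = gk (WithLp.toLp 2 (fun i => x (Fin.castSucc i)))})
    (hl₁ : Ωl ∩ J '' Cl =
      J '' {x ∈ Cl | x (Fin.last d) < gl (WithLp.toLp 2 (fun i => x (Fin.castSucc i)))})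
    (hl₂ : (J '' Cl) \ closure Ωl =
      J '' {x ∈ Cl | gl (WithLp.toLp 2 (fun i => x (Fin.castSucc i))) < x (Fin.last d)})
    (hl₃ : V = J '' {x ∈ Cl | x (Fin.last d) = gl (WithLp.toLp 2 (fun i => x (Fin.castSucc i)))}) :
    {x ∈ Ck | gk (WithLp.toLp 2 (fun i => x (Fin.castSucc i))) < x (Fin.last d)} ∩
        (J '' {x ∈ Cl | gl (WithLp.toLp 2 (fun i => x (Fin.castSucc i))) < x (Fin.last d)}) = ∅ ∧
    V ⊆ Ck ∩ J '' Cl ∧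
    (Ck ∩ J '' Cl) \ V ⊆ Ωk ∪ Ωl :=
  lipschitz_interface_cylinders_general Ωk Ωl hΩk hΩl hdisj V hVne hVsub Bk Bl ck cl rk rl hBk hBl
    ak bk al bl Ck Cl hCk hCl gk gl Kk hgk J hk₁ hk₂ hk₃ hl₁ hl₂ hl₃
end
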